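/- arXiv:1204.5062 — 2 statements merged into one kernel-verified Lean document; each statement's English description precedes it below -/
import Mathlib

section
/- Let Φ be a frame for 𝕂^n with m vectors such that for every j = 1,…,n the submatrix Φ^(j) is in general position, i.e., every collection of n−1 columns of Φ^(j) is linearly independent. Then every dual frame Ψ of Φ satisfies ‖Ψ‖₀ ≥ n². -/
open Matrix

/-- The number of non-vanishing entries of a matrix (the `ℓ₀`-"norm"). -/
noncomputable def l0Norm {𝕂 : Type} [RCLike 𝕂] {n m : ℕ}
    (Ψ : Matrix (Fin n) (Fin m) 𝕂) : ℕ :=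
  Set.ncard {p : Fin n × Fin m | Ψ p.1 p.2 ≠ 0}

/-- The submatrix of `Φ` obtained by deleting the `j`-th row. -/
def deleteRow {𝕂 : Type} [RCLike 𝕂] {n m : ℕ}
    (Φ : Matrix (Fin n) (Fin m) 𝕂) (j : Fin n) :
    Matrix {i : Fin n // i ≠ j} (Fin m) 𝕂 :=
  fun i k => Φ i.1 k

/-- A matrix is in general position (relative to the cardinality `k`) if every
collection of `k` of its columns is linearly independent. -/
def InGeneralPosition {𝕂 : Type} [RCLike 𝕂] {l : Type} {m : ℕ}
    (M : Matrix l (Fin m) 𝕂) (k : ℕ) : Prop :=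
  ∀ S : Finset (Fin m), S.card = k →
    LinearIndependent 𝕂 (fun i : S => fun r => M r (i : Fin m))

/-! The `(r, i)` entry of `Φ Ψᴴ = 1` with `r ≠ i` says that the conjugated `i`-th row of `Ψ`
is a linear relation among the columns of `Φ^(i)`. It is nonzero because the `(i, i)` entry is `1`,
so general position of `Φ^(i)` forces it to have at least `n` nonzero entries; summing over the
`n` rows gives `n²`. -/

theorem InGeneralPosition.linearIndependent_of_card_le {𝕂 : Type} [RCLike 𝕂] {l : Type}
    {m : ℕ} {M : Matrix l (Fin m) 𝕂} {k : ℕ} (hM : InGeneralPosition M k) (hkm : k ≤ m)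
    {S : Finset (Fin m)} (hS : S.card ≤ k) :
    LinearIndependent 𝕂 (fun i : S => fun r => M r (i : Fin m)) := by
  obtain ⟨T, hST, hT⟩ := Finset.exists_superset_card_eq hS (by simpa using hkm)
  exact (hM T hT).comp (fun i : S => (⟨i.1, hST i.2⟩ : T)) fun i j hij =>
    Subtype.ext (congrArg Subtype.val hij :)

theorem sum_smul_col_eq_mulVec {𝕂 : Type} [CommSemiring 𝕂] {l n : Type} [Fintype n]
    (M : Matrix l n 𝕂) (c : n → 𝕂) : ∑ i, c i • (fun r => M r i) = M *ᵥ c := by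
  funext r
  simp [mulVec, dotProduct, Finset.sum_apply, mul_comm]

theorem InGeneralPosition.eq_zero_of_mulVec_eq_zero {𝕂 : Type} [RCLike 𝕂] {l : Type}
    {m : ℕ} {M : Matrix l (Fin m) 𝕂} {k : ℕ} (hM : InGeneralPosition M k) (hkm : k ≤ m)
    {c : Fin m → 𝕂} (hc : (Finset.univ.filter (c · ≠ 0)).card ≤ k) (hMc : M *ᵥ c = 0) :
    c = 0 := by
  set S := Finset.univ.filter (c · ≠ 0)
  have hsum : ∑ i : S, c i • (fun r => M r (i : Fin m)) = 0 := by
    rw [Finset.sum_coe_sort S (fun i => c i • fun r => M r i), ← hMc,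
      ← sum_smul_col_eq_mulVec]
    refine Finset.sum_subset S.subset_univ fun i _ hi => ?_
    rw [show c i = 0 by simpa [S] using hi, zero_smul]
  have hvanish := Fintype.linearIndependent_iff.mp (hM.linearIndependent_of_card_le hkm hc) _ hsum
  funext i
  by_contra hi
  exact hi (hvanish ⟨i, by simpa [S] using hi⟩)

theorem deleteRow_mulVec_star_row_eq_zero {𝕂 : Type} [RCLike 𝕂] {n m : ℕ}
    {Φ Ψ : Matrix (Fin n) (Fin m) 𝕂} (hΨ : Φ * Ψᴴ = 1) (i : Fin n) :
    deleteRow Φ i *ᵥ star (Ψ i) = 0 := by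
  funext r
  have h : (Φ * Ψᴴ) r i = 0 := by rw [hΨ]; exact one_apply_ne r.2
  simpa [mul_apply, mulVec, dotProduct, deleteRow] using h

theorem l0Norm_eq_sum_card_row_support {𝕂 : Type} [RCLike 𝕂] {n m : ℕ}
    (Ψ : Matrix (Fin n) (Fin m) 𝕂) :
    l0Norm Ψ = ∑ i, (Finset.univ.filter (Ψ i · ≠ 0)).card := by
  simp only [l0Norm, Set.ncard_eq_toFinset_card', Set.toFinset_ofPred, Finset.card_filter,
    Fintype.sum_prod_type]

theorem dual_l0Norm_ge_sq_of_general_position_general {𝕂 : Type} [RCLike 𝕂] {n m : ℕ}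
    (Φ : Matrix (Fin n) (Fin m) 𝕂)
    (hGP : ∀ j : Fin n, InGeneralPosition (deleteRow Φ j) (n - 1))
    (Ψ : Matrix (Fin n) (Fin m) 𝕂) (hΨ : Ψ * Φᴴ = 1) :
    n ^ 2 ≤ l0Norm Ψ := by
  have hΨ' : Φ * Ψᴴ = 1 := by simpa using congrArg conjTranspose hΨ
  have hnm : n ≤ m := by
    simpa [hΨ'] using (rank_mul_le_left Φ Ψᴴ).trans (rank_le_card_width Φ)
  have hrow : ∀ i, n ≤ (Finset.univ.filter (Ψ i · ≠ 0)).card := by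
    intro i
    by_contra! hlt
    have hzero : star (Ψ i) = 0 :=
      (hGP i).eq_zero_of_mulVec_eq_zero (by omega) (by simpa using Nat.le_sub_one_of_lt hlt)
        (deleteRow_mulVec_star_row_eq_zero hΨ' i)
    have hdiag : (Ψ * Φᴴ) i i = 1 := by rw [hΨ, one_apply_eq]
    simp [mul_apply, star_eq_zero.mp hzero] at hdiag
  calc n ^ 2 = ∑ _i : Fin n, n := by simp [sq]
    _ ≤ l0Norm Ψ := l0Norm_eq_sum_card_row_support Ψ ▸ Finset.sum_le_sum fun i _ => hrow i

/-- If each submatrix `Φ^(j)` (delete row `j`) of a frame `Φ` for `𝕂^n`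
is in general position (every `n-1` of its columns are linearly independent), then
every dual frame `Ψ` of `Φ` satisfies `‖Ψ‖₀ ≥ n²`. -/
theorem dual_l0Norm_ge_sq_of_general_position {𝕂 : Type} [RCLike 𝕂] {n m : ℕ}
    (Φ : Matrix (Fin n) (Fin m) 𝕂) (hΦ : Φ.rank = n)
    (hGP : ∀ j : Fin n, InGeneralPosition (deleteRow Φ j) (n - 1))
    (Ψ : Matrix (Fin n) (Fin m) 𝕂) (hΨ : Ψ * Φᴴ = 1) :
    n ^ 2 ≤ l0Norm Ψ :=
  dual_l0Norm_ge_sq_of_general_position_general Φ hGP Ψ hΨ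
end

section
/- Let m ≥ n ≥ 1, let F(n,m) be the set of all frames Φ ∈ 𝕂^{n×m}, and let N(n,m) ⊂ F(n,m) be the set of frames whose sparsest dual frame has exactly n² non-zero entries. Then the set F(n,m) \ N(n,m) has (induced Euclidean) Lebesgue measure zero in 𝕂^{n×m}. -/
open Matrix MeasureTheory

/-- `F(n,m)`: the set of all frames of `m` vectors for `𝕂^n`, i.e. rank-`n` matrices. -/
def frameSet (𝕂 : Type) [RCLike 𝕂] (n m : ℕ) : Set (Matrix (Fin n) (Fin m) 𝕂) :=
  {Φ | Φ.rank = n}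

/-- `N(n,m)`: the set of frames in `𝕂^{n×m}` whose sparsest dual frame has exactly
`n²` non-zero entries. -/
def maxSparsityFrames (𝕂 : Type) [RCLike 𝕂] (n m : ℕ) :
    Set (Matrix (Fin n) (Fin m) 𝕂) :=
  {Φ | Φ.rank = n ∧
    IsLeast {c | ∃ Ψ : Matrix (Fin n) (Fin m) 𝕂, Ψ * Φᴴ = 1 ∧ l0Norm Ψ = c} (n ^ 2)}

/-- Lebesgue measure on the space of `n × m` matrices over `𝕂`, obtained as the product
(Euclidean) measure from the measure on `𝕂`. -/
noncomputable instance matrixMeasureSpace {𝕂 : Type} [RCLike 𝕂] [MeasureSpace 𝕂]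
    [SigmaFinite (volume : Measure 𝕂)] {n m : ℕ} :
    MeasureSpace (Matrix (Fin n) (Fin m) 𝕂) :=
  inferInstanceAs (MeasureSpace (Fin n → Fin m → 𝕂))

/-!
Write `ψᵢ` for the rows of a dual frame `Ψ` of `Φ`, so that `Φ ψᵢ* = eᵢ`. If `ψᵢ` had fewer
than `n` non-zero entries, `eᵢ` would lie in the span of `n - 1` columns of `Φ`, and the
`(n - 1) × (n - 1)` minor of `Φ` on those columns and the rows other than `i` would vanish. So
when all these minors are non-zero, every dual frame has at least `n²` non-zero entries.
Conversely, a frame has `n` linearly independent columns, and the dual frame supported on them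
has at most `n²` non-zero entries. Each minor is a non-zero polynomial in the entries of `Φ`,
and the zero set of a non-zero polynomial is Lebesgue-null: by Fubini and induction on the number
of variables, since a non-zero polynomial in one variable has finitely many roots.
-/

open Finset

theorem MvPolynomial.measurable_eval {R σ : Type*} [CommSemiring R] [MeasurableSpace R]
    [MeasurableAdd₂ R] [MeasurableMul₂ R] (p : MvPolynomial σ R) :
    Measurable fun x : σ → R => eval x p := by
  induction p using MvPolynomial.induction_on with
  | C a => simp
  | add p q hp hq => simp only [map_add]; exact hp.add hq
  | mul_X p i hp => simp only [map_mul, eval_X]; exact hp.mul (measurable_pi_apply i)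

theorem MeasureTheory.measurePreserving_curry (ι κ X : Type*) [Fintype ι] [Fintype κ]
    [MeasurableSpace X] (μ : Measure X) [SigmaFinite μ] :
    MeasurePreserving (MeasurableEquiv.curry ι κ X) (Measure.pi fun _ => μ)
      (Measure.pi fun _ => Measure.pi fun _ => μ) := by
  refine ⟨(MeasurableEquiv.curry ι κ X).measurable, (Measure.pi_eq_generateFrom
    (fun _ => generateFrom_pi) (fun _ => isPiSystem_pi)
    (fun _ => Measure.FiniteSpanningSetsIn.pi fun _ => μ.toFiniteSpanningSetsIn) ?_).symm⟩
  intro s hs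
  choose t ht hst using hs
  have : MeasurableEquiv.curry ι κ X ⁻¹' Set.univ.pi s = Set.univ.pi fun p => t p.1 p.2 := by
    ext x
    simp [← hst, MeasurableEquiv.curry, Set.mem_pi]
  rw [MeasurableEquiv.map_apply, this, Measure.pi_pi, Fintype.prod_prod_type]
  simp [← hst, Measure.pi_pi]

namespace MvPolynomial

variable {R : Type*} [CommRing R] [IsDomain R] [MeasurableSpace R] [MeasurableSingletonClass R]
  [MeasurableAdd₂ R] [MeasurableMul₂ R] (μ : Measure R) [SigmaFinite μ] [NullSingletonClass μ]

theorem measure_pi_setOf_eval_eq_zero_fin :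
    ∀ {k : ℕ} {p : MvPolynomial (Fin k) R}, p ≠ 0 →
      Measure.pi (fun _ => μ) {x | eval x p = 0} = 0
  | 0, p, hp => by
    obtain ⟨c, rfl⟩ := C_surjective (Fin 0) p
    simp_all
  | k + 1, p, hp => by
    set q := finSuccEquiv R k p
    obtain ⟨d, hd⟩ : ∃ d, q.coeff d ≠ 0 := by
      by_contra! h
      exact hp ((finSuccEquiv R k).injective (by ext1 d; simp [q, h]))
    have hmap : ∀ᵐ s ∂Measure.pi (fun _ => μ), Polynomial.map (eval s) q ≠ 0 := by
      refine measure_eq_zero_iff_ae_notMem.mp (measure_pi_setOf_eval_eq_zero_fin hd) |>.mono ?_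
      intro s hs hq
      exact hs (by simpa using congrArg (Polynomial.coeff · d) hq)
    have hZ : MeasurableSet {x : Fin (k + 1) → R | eval x p = 0} :=
      measurable_eval p (measurableSet_singleton 0)
    let e := MeasurableEquiv.piFinSuccAbove (fun _ : Fin (k + 1) => R) 0
    rw [← ((measurePreserving_piFinSuccAbove (fun _ => μ) 0).symm e).measure_preimage_equiv,
      Measure.prod_apply_symm (e.symm.measurable hZ)]
    refine (lintegral_congr_ae (hmap.mono fun s hs => ?_)).trans lintegral_zero
    refine Set.Finite.measure_zero ((Polynomial.finite_setOfPred_isRoot hs).subset fun y hy => ?_) μ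
    simpa [e, Fin.consEquiv, eval_eq_eval_mv_eval'] using hy

theorem measure_pi_setOf_eval_eq_zero {σ : Type*} [Fintype σ] {p : MvPolynomial σ R}
    (hp : p ≠ 0) : Measure.pi (fun _ : σ => μ) {x | eval x p = 0} = 0 := by
  let e := Fintype.equivFin σ
  have hq : rename e p ≠ 0 := fun h => hp (rename_injective _ e.injective (by simpa using h))
  have h := measure_pi_setOf_eval_eq_zero_fin μ hq
  have he := measurePreserving_piCongrLeft (α := fun _ => R) (fun _ => μ) e
  rw [← he.measure_preimage_equiv] at h
  convert h using 2
  ext x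
  simp [eval_rename, Function.comp_def, MeasurableEquiv.coe_piCongrLeft]

theorem measure_pi_pi_setOf_eval_eq_zero {ι κ : Type*} [Fintype ι] [Fintype κ]
    {p : MvPolynomial (ι × κ) R} (hp : p ≠ 0) :
    Measure.pi (fun _ : ι => Measure.pi fun _ : κ => μ)
      {x : Matrix ι κ R | eval (fun ij => x ij.1 ij.2) p = 0} = 0 := by
  rw [← (measurePreserving_curry ι κ R μ).measure_preimage_equiv]
  exact measure_pi_setOf_eval_eq_zero μ hp

end MvPolynomial

theorem Function.Embedding.exists_range_superset_of_card_lt {ι κ : Type*} [Fintype ι]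
    [Fintype κ] {s : Finset κ} (hs : #s < Fintype.card ι)
    (hcard : Fintype.card ι ≤ Fintype.card κ) (i : ι) :
    ∃ g : ι ↪ κ, ↑s ⊆ Set.range g ∧ g i ∉ s := by
  classical
  obtain ⟨t, hst, ht⟩ := Finset.exists_superset_card_eq hs.le hcard
  obtain ⟨j, hjt, hjs⟩ := exists_mem_notMem_of_card_lt_card (ht ▸ hs)
  let e : ι ≃ t := Fintype.equivOfCardEq (by simp [ht])
  let g : ι ↪ κ := ((Equiv.swap i (e.symm ⟨j, hjt⟩)).trans e).toEmbedding.trans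
    (Function.Embedding.subtype _)
  refine ⟨g, fun x hx => ?_, by simpa [g] using hjs⟩
  exact ⟨(Equiv.swap i (e.symm ⟨j, hjt⟩)).symm (e.symm ⟨x, hst hx⟩), by simp [g]⟩

namespace Matrix

variable {R ι κ : Type*} [CommRing R] [Fintype ι] [DecidableEq ι]

/-- For `card ι ≤ card κ`, this says that every minor of `Φ` of size `card ι - 1` is non-zero. -/
def CofactorsNeZero (Φ : Matrix ι κ R) : Prop :=
  ∀ (g : ι ↪ κ) (i : ι), (Φ.submatrix id g).adjugate i i ≠ 0

theorem eval_adjugate_submatrix_mvPolynomialX (Φ : Matrix ι κ R) (g : ι → κ) (i : ι) :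
    MvPolynomial.eval (fun p => Φ p.1 p.2)
      (((mvPolynomialX ι κ R).submatrix id g).adjugate i i) = (Φ.submatrix id g).adjugate i i := by
  have := congrFun₂ (RingHom.map_adjugate (MvPolynomial.eval fun p => Φ p.1 p.2)
    ((mvPolynomialX ι κ R).submatrix id g)) i i
  rw [RingHom.mapMatrix_apply, map_apply] at this
  rw [this]
  congr
  ext a b
  simp [mvPolynomialX_apply]

theorem measure_setOf_not_cofactorsNeZero [IsDomain R] [MeasurableSpace R]
    [MeasurableSingletonClass R] [MeasurableAdd₂ R] [MeasurableMul₂ R] (μ : Measure R)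
    [SigmaFinite μ] [NullSingletonClass μ] [Fintype κ] :
    Measure.pi (fun _ : ι => Measure.pi fun _ : κ => μ)
      {Φ : Matrix ι κ R | ¬ Φ.CofactorsNeZero} = 0 := by
  have hsub : {Φ : Matrix ι κ R | ¬ Φ.CofactorsNeZero} ⊆
      ⋃ (g : ι ↪ κ) (i : ι), {Φ | (Φ.submatrix id g).adjugate i i = 0} := fun Φ hΦ => by
    simpa [CofactorsNeZero] using hΦ
  refine measure_mono_null hsub (measure_iUnion_null fun g => measure_iUnion_null fun i => ?_)
  have hP : ((mvPolynomialX ι κ R).submatrix id g).adjugate i i ≠ 0 := fun h => by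
    classical
    simpa [h, submatrix_submatrix, submatrix_one_embedding] using
      eval_adjugate_submatrix_mvPolynomialX ((1 : Matrix κ κ R).submatrix g id) g i
  have h := MvPolynomial.measure_pi_pi_setOf_eval_eq_zero μ hP
  simp only [eval_adjugate_submatrix_mvPolynomialX] at h
  exact h

theorem adjugate_apply_self_eq_zero_of_mulVec_eq_single {A : Matrix ι ι R} {u : ι → R} {i : ι}
    (h : A *ᵥ u = Pi.single i 1) (hu : u i = 0) : A.adjugate i i = 0 := by
  have := congrFun (congrArg (A.adjugate *ᵥ ·) h) i
  simp only [mulVec_mulVec, adjugate_mul, smul_mulVec, one_mulVec, mulVec_single_one] at this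
  simpa [hu] using this.symm

theorem card_le_card_support_of_mulVec_eq_single [DecidableEq R] [Fintype κ]
    {Φ : Matrix ι κ R} (hΦ : Φ.CofactorsNeZero) (hcard : Fintype.card ι ≤ Fintype.card κ)
    {w : κ → R} {i : ι} (hw : Φ *ᵥ w = Pi.single i 1) : Fintype.card ι ≤ #{j | w j ≠ 0} := by
  by_contra! hlt
  obtain ⟨g, hsupp, hgi⟩ := Function.Embedding.exists_range_superset_of_card_lt hlt hcard i
  refine hΦ g i (adjugate_apply_self_eq_zero_of_mulVec_eq_single (u := w ∘ g) ?_
    (by simpa using hgi))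
  rw [← hw]
  ext a
  refine Fintype.sum_of_injective g g.injective _ _ (fun j hj => ?_) fun b => rfl
  by_contra hne
  exact hj (hsupp (by simpa using right_ne_zero_of_mul hne))

theorem exists_isUnit_submatrix_of_rank_eq_card {K : Type*} [Field K] [Fintype κ]
    {A : Matrix ι κ K} (h : A.rank = Fintype.card ι) :
    ∃ g : ι → κ, IsUnit (A.submatrix id g) := by
  obtain ⟨κ', a, ha, hspan, hli⟩ := exists_linearIndependent' K A.col
  have : Finite κ' := Finite.of_injective a ha
  have := Fintype.ofFinite κ'
  have hcard : Fintype.card ι = Fintype.card κ' := by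
    rw [← h, rank_eq_finrank_span_cols, ← hspan, finrank_span_eq_card hli]
  let e := Fintype.equivOfCardEq hcard
  exact ⟨a ∘ e, linearIndependent_cols_iff_isUnit.mp (hli.comp e e.injective)⟩

end Matrix

section Frames

variable {𝕂 : Type} [RCLike 𝕂] {n m : ℕ}

theorem l0Norm_eq_sum_card [DecidableEq 𝕂] (Ψ : Matrix (Fin n) (Fin m) 𝕂) :
    l0Norm Ψ = ∑ i, #{j | Ψ i j ≠ 0} := by
  rw [l0Norm, Set.ncard_eq_toFinset_card', Set.toFinset_ofPred, card_filter,
    Fintype.sum_prod_type]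
  simp [card_filter]

theorem exists_dual_l0Norm_le {Φ : Matrix (Fin n) (Fin m) 𝕂} (hΦ : Φ.rank = n) :
    ∃ Ψ : Matrix (Fin n) (Fin m) 𝕂, Ψ * Φᴴ = 1 ∧ l0Norm Ψ ≤ n ^ 2 := by
  classical
  obtain ⟨g, hg⟩ := exists_isUnit_submatrix_of_rank_eq_card (A := Φ) (by simpa using hΦ)
  set P : Matrix (Fin n) (Fin m) 𝕂 := (1 : Matrix (Fin m) (Fin m) 𝕂).submatrix g id
  have hP : P * Φᴴ = (Φ.submatrix id g)ᴴ := by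
    simpa [conjTranspose_submatrix] using one_submatrix_mul g (Equiv.refl _) Φᴴ
  refine ⟨((Φ.submatrix id g)ᴴ)⁻¹ * P, ?_, ?_⟩
  · rw [Matrix.mul_assoc, hP,
      nonsing_inv_mul (Φ.submatrix id g)ᴴ ((isUnit_iff_isUnit_det _).mp hg.star)]
  · rw [l0Norm_eq_sum_card, sq]
    calc ∑ i, #{j | (((Φ.submatrix id g)ᴴ)⁻¹ * P) i j ≠ 0}
        ≤ ∑ _i : Fin n, #(univ.image g) := sum_le_sum fun i _ => card_le_card fun j hj => ?_
      _ ≤ n * n := by simpa using Nat.mul_le_mul_left n (card_image_le (s := univ) (f := g))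
    by_contra hjg
    simp only [mem_image, mem_univ, true_and, not_exists] at hjg
    simp [P, mul_apply, one_apply, hjg] at hj

theorem le_l0Norm_of_mul_conjTranspose_eq_one {Φ Ψ : Matrix (Fin n) (Fin m) 𝕂}
    (hΦ : Φ.CofactorsNeZero) (hnm : n ≤ m) (hΨ : Ψ * Φᴴ = 1) : n ^ 2 ≤ l0Norm Ψ := by
  classical
  have hΦΨ : Φ * Ψᴴ = 1 := by simpa using congrArg conjTranspose hΨ
  rw [l0Norm_eq_sum_card]
  calc n ^ 2 = ∑ _i : Fin n, n := by simp [sq]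
    _ ≤ ∑ i, #{j | Ψ i j ≠ 0} := sum_le_sum fun i _ => ?_
  have hw : Φ *ᵥ (fun j => star (Ψ i j)) = Pi.single i 1 := by
    ext a
    simpa [mulVec, dotProduct, mul_apply, one_apply, Pi.single_apply, eq_comm] using
      congrFun₂ hΦΨ a i
  simpa using card_le_card_support_of_mulVec_eq_single hΦ (by simpa using hnm) hw

theorem mem_maxSparsityFrames_of_cofactorsNeZero {Φ : Matrix (Fin n) (Fin m) 𝕂}
    (hΦ : Φ.rank = n) (hgen : Φ.CofactorsNeZero) : Φ ∈ maxSparsityFrames 𝕂 n m := by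
  obtain ⟨Ψ, hΨ, hle⟩ := exists_dual_l0Norm_le hΦ
  have hnm : n ≤ m := hΦ ▸ Φ.rank_le_width
  refine ⟨hΦ, ⟨Ψ, hΨ, le_antisymm hle (le_l0Norm_of_mul_conjTranspose_eq_one hgen hnm hΨ)⟩, ?_⟩
  rintro _ ⟨Ψ', hΨ', rfl⟩
  exact le_l0Norm_of_mul_conjTranspose_eq_one hgen hnm hΨ'

end Frames

theorem frames_not_max_sparsity_measure_zero_general {𝕂 : Type} [RCLike 𝕂]
    [MeasureSpace 𝕂] [BorelSpace 𝕂] [SigmaFinite (volume : Measure 𝕂)]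
    [(volume : Measure 𝕂).IsAddHaarMeasure] {n m : ℕ} :
    volume (frameSet 𝕂 n m \ maxSparsityFrames 𝕂 n m) = 0 :=
  measure_mono_null (fun _ hΦ hgen => hΦ.2 (mem_maxSparsityFrames_of_cofactorsNeZero hΦ.1 hgen))
    (measure_setOf_not_cofactorsNeZero volume)

/-- For `m ≥ n ≥ 1`, the set `F(n,m) \ N(n,m)` of frames whose
sparsest dual does not have exactly `n²` non-zero entries has Lebesgue measure zero
(where the Lebesgue measure on `𝕂 = ℝ` or `ℂ` is formalized as an additive Haar
measure). -/
theorem frames_not_max_sparsity_measure_zero {𝕂 : Type} [RCLike 𝕂]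
    [MeasureSpace 𝕂] [BorelSpace 𝕂] [SigmaFinite (volume : Measure 𝕂)]
    [(volume : Measure 𝕂).IsAddHaarMeasure] {n m : ℕ}
    (hn : 1 ≤ n) (hnm : n ≤ m) :
    volume (frameSet 𝕂 n m \ maxSparsityFrames 𝕂 n m) = 0 :=
  frames_not_max_sparsity_measure_zero_general
end
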